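/- (Convergence of gradient descent for smooth convex functions) Let f : ℝ^m → ℝ be convex, differentiable, with L-Lipschitz gradient, and let w* be a minimizer of f. Let w^{(k)} be generated by gradient descent w^{(i+1)} = w^{(i)} − α ∇f(w^{(i)}) with fixed step size 0 < α ≤ 1/L. Then for all k ≥ 1, f(w^{(k)}) − f(w*) ≤ ‖w^{(0)} − w*‖² / (2kα). -/

import Mathlib

/-!
The descent lemma makes each step decrease `f` by at least `α/2 ‖∇f(w i)‖²`. Adding the
first-order convexity inequality at `w i` turns this into
`f (w (i+1)) - f w* ≤ (‖w i - w*‖² - ‖w (i+1) - w*‖²) / (2α)`, which telescopes; as `f (w i)` is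
nonincreasing, the sum of the first `k` left-hand sides is at least `k (f (w k) - f w*)`.
-/

open InnerProductSpace AffineMap Set

section

variable {E : Type*} [NormedAddCommGroup E] [InnerProductSpace ℝ E] [CompleteSpace E]
  {f : E → ℝ}

theorem HasGradientAt.hasDerivAt_comp_lineMap {g x y : E} {t : ℝ}
    (hf : HasGradientAt f g (lineMap x y t)) :
    HasDerivAt (fun s : ℝ => f (lineMap x y s)) (inner ℝ g (y - x)) t := by
  have h := (hasGradientAt_iff_hasFDerivAt.1 hf).comp_hasDerivAt t hasDerivAt_lineMap
  simp only [toDual_apply_apply] at h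
  exact h

theorem ConvexOn.add_inner_sub_le_of_hasGradientAt {s : Set E} (hconv : ConvexOn ℝ s f)
    {g x y : E} (hx : x ∈ s) (hy : y ∈ s) (hf : HasGradientAt f g x) :
    f x + inner ℝ g (y - x) ≤ f y := by
  have hline : ConvexOn ℝ (lineMap x y ⁻¹' s) (fun t : ℝ => f (lineMap x y t)) :=
    hconv.comp_affineMap (lineMap x y)
  have hd : HasDerivAt (fun t : ℝ => f (lineMap x y t)) (inner ℝ g (y - x)) 0 :=
    HasGradientAt.hasDerivAt_comp_lineMap (by simpa using hf)
  have := hline.le_slope_of_hasDerivAt (x := 0) (y := 1) (by simpa using hx) (by simpa using hy)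
    one_pos hd
  simp only [slope_def_field, lineMap_apply_one, lineMap_apply_zero, sub_zero, div_one] at this
  linarith

theorem le_add_inner_add_mul_sq_of_gradient_lipschitz {g : E → E} {L : ℝ}
    (hf : ∀ z, HasGradientAt f (g z) z) {x : E} (hlip : ∀ z, ‖g z - g x‖ ≤ L * ‖z - x‖)
    (y : E) :
    f y ≤ f x + inner ℝ (g x) (y - x) + L / 2 * ‖y - x‖ ^ 2 := by
  -- `φ` is antitone on `[0, ∞)`; this replaces the integral form of the Taylor remainder.
  set φ : ℝ → ℝ := fun t =>
    f (lineMap x y t) - t * inner ℝ (g x) (y - x) - L / 2 * t ^ 2 * ‖y - x‖ ^ 2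
  have hφ' : ∀ t, HasDerivAt φ
      (inner ℝ (g (lineMap x y t) - g x) (y - x) - L * t * ‖y - x‖ ^ 2) t := by
    intro t
    have := (((hf (lineMap x y t)).hasDerivAt_comp_lineMap).sub
      ((hasDerivAt_id t).mul_const (inner ℝ (g x) (y - x)))).sub
      (((hasDerivAt_pow 2 t).const_mul (L / 2)).mul_const (‖y - x‖ ^ 2))
    refine this.congr_deriv ?_
    rw [inner_sub_left]
    push_cast
    ring
  have hφ'_nonpos : ∀ t ∈ interior (Ici (0 : ℝ)),
      inner ℝ (g (lineMap x y t) - g x) (y - x) - L * t * ‖y - x‖ ^ 2 ≤ 0 := by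
    intro t ht
    rw [interior_Ici, mem_Ioi] at ht
    refine sub_nonpos.2 ?_
    have hdist : ‖lineMap x y t - x‖ = t * ‖y - x‖ := by
      rw [lineMap_apply_module', add_sub_cancel_right, norm_smul, Real.norm_of_nonneg ht.le]
    calc inner ℝ (g (lineMap x y t) - g x) (y - x)
        ≤ ‖g (lineMap x y t) - g x‖ * ‖y - x‖ := real_inner_le_norm _ _
      _ ≤ L * (t * ‖y - x‖) * ‖y - x‖ := by
          rw [← hdist]; exact mul_le_mul_of_nonneg_right (hlip _) (norm_nonneg _)
      _ = L * t * ‖y - x‖ ^ 2 := by ring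
  have hanti : AntitoneOn φ (Ici 0) :=
    antitoneOn_of_hasDerivWithinAt_nonpos (convex_Ici 0)
      (fun t _ => (hφ' t).continuousAt.continuousWithinAt)
      (fun t _ => (hφ' t).hasDerivWithinAt) hφ'_nonpos
  have := hanti (mem_Ici.2 le_rfl) (mem_Ici.2 zero_le_one) zero_le_one
  simp only [φ, lineMap_apply_zero, lineMap_apply_one] at this
  linarith
theorem apply_sub_smul_le_of_gradient_lipschitz {g : E → E} {L α : ℝ}
    (hf : ∀ z, HasGradientAt f (g z) z) {x : E} (hlip : ∀ z, ‖g z - g x‖ ≤ L * ‖z - x‖)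
    (hα : 0 ≤ α) (hαL : L * α ≤ 1) :
    f (x - α • g x) ≤ f x - α / 2 * ‖g x‖ ^ 2 := by
  have h := le_add_inner_add_mul_sq_of_gradient_lipschitz hf hlip (x - α • g x)
  rw [sub_sub_cancel_left, inner_neg_right, real_inner_smul_right, real_inner_self_eq_norm_sq,
    norm_neg, norm_smul, Real.norm_of_nonneg hα] at h
  nlinarith [mul_nonneg (mul_nonneg hα (sub_nonneg.2 hαL)) (sq_nonneg ‖g x‖)]

theorem apply_sub_smul_sub_le_of_gradient_lipschitz {s : Set E} (hconv : ConvexOn ℝ s f)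
    {g : E → E} {L α : ℝ} (hf : ∀ z, HasGradientAt f (g z) z) {x z : E} (hx : x ∈ s)
    (hz : z ∈ s) (hlip : ∀ y, ‖g y - g x‖ ≤ L * ‖y - x‖) (hα : 0 < α) (hαL : L * α ≤ 1) :
    f (x - α • g x) - f z ≤ (‖x - z‖ ^ 2 - ‖x - α • g x - z‖ ^ 2) / (2 * α) := by
  have hdecrease := apply_sub_smul_le_of_gradient_lipschitz hf hlip hα.le hαL
  have hsupport := hconv.add_inner_sub_le_of_hasGradientAt hx hz (hf x)
  have hexpand : ‖x - α • g x - z‖ ^ 2 =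
      ‖x - z‖ ^ 2 - 2 * α * inner ℝ (g x) (x - z) + α ^ 2 * ‖g x‖ ^ 2 := by
    rw [sub_right_comm, norm_sub_sq_real, real_inner_smul_right, real_inner_comm, norm_smul,
      Real.norm_of_nonneg hα.le]
    ring
  rw [← neg_sub x z, inner_neg_right] at hsupport
  rw [le_div_iff₀ (by positivity), hexpand]
  nlinarith

end

theorem Antitone.nat_mul_le_sub_of_le_sub_succ {e D : ℕ → ℝ} (he : Antitone e)
    (hstep : ∀ i, e (i + 1) ≤ D i - D (i + 1)) (k : ℕ) : k * e k ≤ D 0 - D k := by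
  induction k with
  | zero => simp
  | succ k ih =>
    have hmono : (k : ℝ) * e (k + 1) ≤ k * e k :=
      mul_le_mul_of_nonneg_left (he k.le_succ) k.cast_nonneg
    push_cast
    linarith [hstep k]

theorem gradient_descent_convergence_general {m : ℕ}
    (f : EuclideanSpace ℝ (Fin m) → ℝ)
    (f' : EuclideanSpace ℝ (Fin m) → EuclideanSpace ℝ (Fin m))
    (hf : ∀ x, HasGradientAt f (f' x) x)
    (hconv : ConvexOn ℝ Set.univ f)
    (L : ℝ) (hL : 0 < L)
    (hlip : ∀ x y, ‖f' x - f' y‖ ≤ L * ‖x - y‖)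
    (α : ℝ) (hα : 0 < α) (hαL : α ≤ 1 / L)
    (w : ℕ → EuclideanSpace ℝ (Fin m))
    (hiter : ∀ i : ℕ, w (i + 1) = w i - α • f' (w i))
    (wstar : EuclideanSpace ℝ (Fin m)) :
    ∀ k : ℕ, 1 ≤ k →
      f (w k) - f wstar ≤ ‖w 0 - wstar‖ ^ 2 / (2 * k * α) := by
  intro k hk
  have hLα : L * α ≤ 1 := by rwa [le_div_iff₀ hL, mul_comm] at hαL
  have hmono : Antitone fun i => f (w i) - f wstar := antitone_nat_of_succ_le fun i => by
    have := apply_sub_smul_le_of_gradient_lipschitz hf (fun z => hlip z (w i)) hα.le hLα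
    have : 0 ≤ α / 2 * ‖f' (w i)‖ ^ 2 := by positivity
    rw [hiter]
    linarith
  have hstep (i : ℕ) : f (w (i + 1)) - f wstar ≤
      ‖w i - wstar‖ ^ 2 / (2 * α) - ‖w (i + 1) - wstar‖ ^ 2 / (2 * α) := by
    rw [← sub_div, hiter]
    exact apply_sub_smul_sub_le_of_gradient_lipschitz hconv hf trivial trivial
      (fun z => hlip z (w i)) hα hLα
  have hbound : (k : ℝ) * (f (w k) - f wstar) ≤ ‖w 0 - wstar‖ ^ 2 / (2 * α) :=
    (hmono.nat_mul_le_sub_of_le_sub_succ hstep k).trans (sub_le_self _ (by positivity))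
  have hk₀ : (0 : ℝ) < k := by exact_mod_cast hk
  rw [le_div_iff₀ (by positivity)] at hbound ⊢
  linear_combination hbound

/-- Convergence of gradient descent with fixed step size `0 < α ≤ 1/L` for a
convex function with `L`-Lipschitz gradient:
`f(w^{(k)}) - f(w*) ≤ ‖w^{(0)} - w*‖² / (2 k α)`. -/
theorem gradient_descent_convergence {m : ℕ}
    (f : EuclideanSpace ℝ (Fin m) → ℝ)
    (f' : EuclideanSpace ℝ (Fin m) → EuclideanSpace ℝ (Fin m))
    (hf : ∀ x, HasGradientAt f (f' x) x)
    (hconv : ConvexOn ℝ Set.univ f)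
    (L : ℝ) (hL : 0 < L)
    (hlip : ∀ x y, ‖f' x - f' y‖ ≤ L * ‖x - y‖)
    (α : ℝ) (hα : 0 < α) (hαL : α ≤ 1 / L)
    (w : ℕ → EuclideanSpace ℝ (Fin m))
    (hiter : ∀ i : ℕ, w (i + 1) = w i - α • f' (w i))
    (wstar : EuclideanSpace ℝ (Fin m)) (hmin : ∀ x, f wstar ≤ f x) :
    ∀ k : ℕ, 1 ≤ k →
      f (w k) - f wstar ≤ ‖w 0 - wstar‖ ^ 2 / (2 * k * α) :=
  gradient_descent_convergence_general f f' hf hconv L hL hlip α hα hαL w hiter wstar
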